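/- Assume t_s ≥ t_k. Define g(p) = t_k (∫_{π̲}^{p} x f(x) dx)/F(p) − π̄ t_k + (p F(p) − ∫_{π̲}^{p} x f(x) dx)·(t_s − t_k (1/F(p) − 1)). Then g is nondecreasing on the region {p ∈ [π̲, π̄] : F(p) ≥ 1/2}, and g(π̄) = (π̄ − ∫_{π̲}^{π̄} x f(x) dx)(t_s − t_k) ≥ 0. -/

import Mathlib

/-!
Write `L(p) = p F(p) - ∫_{π̲}^{p} x f(x) dx = ∫_{π̲}^{p} (p - x) f(x) dx`. Where `F(p) ≠ 0`,
`g(p) = t_k p + L(p) (t_s + t_k - 2 t_k / F(p)) - π̄ t_k`. For `p ≤ q`, `L(q) - L(p)` lies between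
`(q - p) F(p)` and `(q - p) F(q)`, and `L ≥ 0`. On `{F ≥ 1/2}` the factor `t_s + t_k - 2 t_k / F`
increases with `p`, while the increment of `L` together with `t_k (q - p)` contributes at least
`(q - p) (F(p) (t_s + t_k) - t_k) ≥ (q - p) (t_s - t_k) / 2 ≥ 0`.
-/

open MeasureTheory intervalIntegral Set

/-- The first lower partial moment `∫_a^p (p - x) f(x) dx`, expanded as it occurs in `g`. -/
noncomputable def lowerPartialMoment (f : ℝ → ℝ) (a p : ℝ) : ℝ :=
  p * (∫ x in a..p, f x) - ∫ x in a..p, x * f x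

section LowerPartialMoment

variable {f : ℝ → ℝ} {a p q : ℝ}

@[simp]
theorem lowerPartialMoment_self : lowerPartialMoment f a a = 0 := by
  simp [lowerPartialMoment]

theorem lowerPartialMoment_sub (hap : IntervalIntegrable f volume a p)
    (hpq : IntervalIntegrable f volume p q) :
    lowerPartialMoment f a q - lowerPartialMoment f a p =
      (q - p) * (∫ x in a..p, f x) + ∫ x in p..q, (q - x) * f x := by
  have hxf : ∀ {b c}, IntervalIntegrable f volume b c →
      IntervalIntegrable (fun x => x * f x) volume b c :=
    fun h => h.continuousOn_mul continuousOn_id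
  simp only [lowerPartialMoment, sub_mul,
    integral_sub (hpq.const_mul q) (hxf hpq), intervalIntegral.integral_const_mul,
    ← integral_add_adjacent_intervals hap hpq,
    ← integral_add_adjacent_intervals (hxf hap) (hxf hpq)]
  ring

theorem integral_sub_mul_nonneg (hpq : p ≤ q) (hf : ∀ x ∈ Icc p q, 0 ≤ f x) :
    0 ≤ ∫ x in p..q, (q - x) * f x :=
  integral_nonneg hpq fun x hx => mul_nonneg (sub_nonneg.2 hx.2) (hf x hx)

theorem integral_sub_mul_le (hpq : p ≤ q) (hi : IntervalIntegrable f volume p q)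
    (hf : ∀ x ∈ Icc p q, 0 ≤ f x) :
    ∫ x in p..q, (q - x) * f x ≤ (q - p) * ∫ x in p..q, f x := by
  rw [← intervalIntegral.integral_const_mul]
  refine integral_mono_on hpq (hi.continuousOn_mul (by fun_prop)) (hi.const_mul _) fun x hx => ?_
  exact mul_le_mul_of_nonneg_right (by linarith [hx.1]) (hf x hx)

theorem mul_integral_le_lowerPartialMoment_sub (hpq : p ≤ q)
    (hap : IntervalIntegrable f volume a p) (hi : IntervalIntegrable f volume p q)
    (hf : ∀ x ∈ Icc p q, 0 ≤ f x) :
    (q - p) * (∫ x in a..p, f x) ≤ lowerPartialMoment f a q - lowerPartialMoment f a p := by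
  rw [lowerPartialMoment_sub hap hi]
  linarith [integral_sub_mul_nonneg hpq hf]

theorem lowerPartialMoment_sub_le_mul_integral (hpq : p ≤ q)
    (hap : IntervalIntegrable f volume a p) (hi : IntervalIntegrable f volume p q)
    (hf : ∀ x ∈ Icc p q, 0 ≤ f x) :
    lowerPartialMoment f a q - lowerPartialMoment f a p ≤ (q - p) * (∫ x in a..q, f x) := by
  rw [lowerPartialMoment_sub hap hi, ← integral_add_adjacent_intervals hap hi]
  linarith [integral_sub_mul_le hpq hi hf]

theorem lowerPartialMoment_nonneg (hap : a ≤ p) (hi : IntervalIntegrable f volume a p)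
    (hf : ∀ x ∈ Icc a p, 0 ≤ f x) : 0 ≤ lowerPartialMoment f a p := by
  simpa using mul_integral_le_lowerPartialMoment_sub hap IntervalIntegrable.refl hi hf

theorem integral_mono_right_of_nonneg (hpq : p ≤ q) (hap : IntervalIntegrable f volume a p)
    (hi : IntervalIntegrable f volume p q) (hf : ∀ x ∈ Icc p q, 0 ≤ f x) :
    ∫ x in a..p, f x ≤ ∫ x in a..q, f x := by
  rw [← integral_add_adjacent_intervals hap hi]
  linarith [integral_nonneg (μ := volume) hpq hf]

end LowerPartialMoment

theorem add_mul_le_add_mul_of_increment_bounds {tk ts p q F F' L L' : ℝ} (htk : 0 < tk)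
    (htsk : tk ≤ ts) (hpq : p ≤ q) (hF : 1 / 2 ≤ F) (hFF' : F ≤ F') (hL : 0 ≤ L)
    (hlow : (q - p) * F ≤ L' - L) (hup : L' - L ≤ (q - p) * F') :
    tk * p + L * (ts + tk - 2 * tk / F) ≤ tk * q + L' * (ts + tk - 2 * tk / F') := by
  have hF' : 0 < F' := by linarith
  have hfactor : L * (ts + tk - 2 * tk / F) ≤ L * (ts + tk - 2 * tk / F') := by
    gcongr
  have hratio : (L' - L) / F' ≤ q - p := by rwa [div_le_iff₀ hF']
  have hgrowth : 0 ≤ tk * (q - p) + (L' - L) * (ts + tk - 2 * tk / F') := by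
    have hhalf : (q - p) / 2 ≤ L' - L := by
      nlinarith [mul_le_mul_of_nonneg_left hF (sub_nonneg.2 hpq)]
    calc 0 ≤ (q - p) * (ts - tk) / 2 := by
          have := mul_nonneg (sub_nonneg.2 hpq) (sub_nonneg.2 htsk); linarith
      _ ≤ tk * (q - p) + (L' - L) * (ts + tk) - 2 * tk * ((L' - L) / F') := by
        nlinarith [mul_le_mul_of_nonneg_right hhalf (by linarith : 0 ≤ ts + tk),
          mul_le_mul_of_nonneg_left hratio (by linarith : 0 ≤ 2 * tk)]
      _ = tk * (q - p) + (L' - L) * (ts + tk - 2 * tk / F') := by ring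
  linarith

theorem stmt_7
    (πlo πhi : ℝ) (f F : ℝ → ℝ)
    (hlt : πlo < πhi)
    (hnn : ∀ x ∈ Set.Icc πlo πhi, 0 ≤ f x)
    (hone : (∫ x in πlo..πhi, f x) = 1)
    (hF : ∀ p, F p = ∫ x in πlo..p, f x)
    (tk ts : ℝ) (htk : 0 < tk) (htsk : tk ≤ ts)
    (g : ℝ → ℝ)
    (hg : ∀ p, g p = tk * ((∫ x in πlo..p, x * f x) / F p) - πhi * tk +
      (p * F p - ∫ x in πlo..p, x * f x) * (ts - tk * (1 / F p - 1))) :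
    (∀ p ∈ Set.Icc πlo πhi, ∀ p' ∈ Set.Icc πlo πhi,
      1 / 2 ≤ F p → 1 / 2 ≤ F p' → p ≤ p' → g p ≤ g p') ∧
    g πhi = (πhi - ∫ x in πlo..πhi, x * f x) * (ts - tk) ∧
    0 ≤ g πhi := by
  have hint : ∀ p ∈ Icc πlo πhi, ∀ q ∈ Icc πlo πhi, IntervalIntegrable f volume p q :=
    fun p hp q hq => (intervalIntegrable_of_integral_ne_zero (by simp [hone])).mono_set
      (uIcc_subset_uIcc (Icc_subset_uIcc hp) (Icc_subset_uIcc hq))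
  have hlo : πlo ∈ Icc πlo πhi := left_mem_Icc.2 hlt.le
  have hhi : πhi ∈ Icc πlo πhi := right_mem_Icc.2 hlt.le
  have hg_eq : ∀ p, 1 / 2 ≤ F p →
      g p = tk * p + lowerPartialMoment f πlo p * (ts + tk - 2 * tk / F p) - πhi * tk := by
    intro p hp
    rw [hg, lowerPartialMoment, ← hF]
    field_simp
    ring
  have hval : g πhi = (πhi - ∫ x in πlo..πhi, x * f x) * (ts - tk) := by
    rw [hg, hF, hone]; ring
  refine ⟨fun p hp q hq hFp hFq hpq => ?_, hval, ?_⟩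
  · have hfpq : ∀ x ∈ Icc p q, 0 ≤ f x := fun x hx => hnn x ⟨hp.1.trans hx.1, hx.2.trans hq.2⟩
    rw [hg_eq p hFp, hg_eq q hFq, hF, hF]
    rw [hF] at hFp
    gcongr ?_ - _
    refine add_mul_le_add_mul_of_increment_bounds htk htsk hpq hFp
      (integral_mono_right_of_nonneg hpq (hint _ hlo _ hp) (hint _ hp _ hq) hfpq)
      (lowerPartialMoment_nonneg hp.1 (hint _ hlo _ hp)
        fun x hx => hnn x ⟨hx.1, hx.2.trans hp.2⟩)
      (mul_integral_le_lowerPartialMoment_sub hpq (hint _ hlo _ hp) (hint _ hp _ hq) hfpq)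
      (lowerPartialMoment_sub_le_mul_integral hpq (hint _ hlo _ hp) (hint _ hp _ hq) hfpq)
  · have hL := lowerPartialMoment_nonneg hlt.le (hint _ hlo _ hhi) hnn
    rw [lowerPartialMoment, hone, mul_one] at hL
    rw [hval]
    exact mul_nonneg hL (sub_nonneg.2 htsk)
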